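/- arXiv:1804.02240 — 3 statements merged into one kernel-verified Lean document; each statement's English description precedes it below -/
import Mathlib

section
/- Let T be a triangulated category with a t-structure (T^{≤0}, T^{≥0}). Suppose there exist an integer A and an object G of T which is a generator (Hom(ΣⁱG, u) = 0 for all i ∈ ℤ implies u = 0) such that Hom(G, T^{≤-A}) = 0. Then: (1) any object F ∈ T⁻ with Hᵉ(F) = 0 for all ℓ ∈ ℤ must be zero; (2) any morphism f : E → F in T⁻ such that Hᵉ(f) is an isomorphism for all ℓ ∈ ℤ is an isomorphism. -/
/-!
STATEMENT 3: Let T be a triangulated category with a t-structure. Suppose there exist an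
integer A and a generator G (Hom(ΣⁱG, u) = 0 for all i ∈ ℤ implies u = 0) with
Hom(G, T^{≤-A}) = 0. Then:
(1) any F ∈ T⁻ with Hᵉ(F) = 0 for all ℓ is zero;
(2) any morphism f : E → F in T⁻ with Hᵉ(f) an isomorphism for all ℓ is an isomorphism.

Truncation data and heart cohomology functors Hᵉ are packaged as in `TruncationData`.
-/

open CategoryTheory Limits Pretriangulated Triangulated

universe v u

variable {C : Type u} [Category.{v} C] [Preadditive C] [HasZeroObject C] [HasShift C ℤ]
  [∀ n : ℤ, (shiftFunctor C n).Additive] [Pretriangulated C]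

/-- Truncation data for a t-structure. -/
structure TruncationData (t : TStructure C) where
  truncLE (n : ℤ) : C ⥤ C
  truncGE (n : ℤ) : C ⥤ C
  truncLE_le (n : ℤ) (X : C) : t.le n ((truncLE n).obj X)
  truncGE_ge (n : ℤ) (X : C) : t.ge n ((truncGE n).obj X)
  ιLE (n : ℤ) : truncLE n ⟶ 𝟭 C
  πGE (n : ℤ) : 𝟭 C ⟶ truncGE n
  δ (n : ℤ) (X : C) : (truncGE (n + 1)).obj X ⟶ ((truncLE n).obj X)⟦(1 : ℤ)⟧
  triangle_mem (n : ℤ) (X : C) :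
    Triangle.mk ((ιLE n).app X) ((πGE (n + 1)).app X) (δ n X) ∈ distTriang C

/-- The ℓ-th heart cohomology functor `Hᵉ(-) = Σᵉ((-)^{≤ℓ})^{≥ℓ}`. -/
def TruncationData.H {t : TStructure C} (d : TruncationData t) (ℓ : ℤ) : C ⥤ C :=
  d.truncLE ℓ ⋙ d.truncGE ℓ ⋙ shiftFunctor C ℓ

/-!
Let `S` be the class of objects `W` with `Hom(W, T^{≤a}) = 0` for some `a`. It contains every
`ΣⁱG`, is stable under `Σ⁻¹`, and detects zero objects because `G` is a generator.

If `f : X → Y` is a map in `T^{≤n}` inducing isomorphisms on all `Hᵉ` and `W ∈ S`, then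
`Hom(W, f)` is bijective, by induction on `n - a`: the truncation triangles
`τ^{≤n-1} → (-) → τ^{≥n}` of `X` and `Y` are related by a morphism whose third component is
an isomorphism (it is `Hⁿ(f)` up to shift), so a four-lemma chase in `Hom(W, -)` reduces the
claim to `τ^{≤n-1} f` tested against `W` and `Σ⁻¹W`, where the induction hypothesis applies.
Consequently `Hom(W, cone f) = 0` for all `W ∈ S`, so `f` is an isomorphism. Part (1) is
part (2) applied to `0 → F`.
-/

open Function ZeroObject

section Hom

variable {D : Type*} [Category D]

lemma isIso_map_iff_of_isIso_app {E : Type*} [Category E] {F G : D ⥤ E} (α : F ⟶ G)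
    {X Y : D} (f : X ⟶ Y) (hX : IsIso (α.app X)) (hY : IsIso (α.app Y)) :
    IsIso (F.map f) ↔ IsIso (G.map f) :=
  (MorphismProperty.isomorphisms E).arrow_mk_iso_iff
    (Arrow.isoMk (asIso (α.app X)) (asIso (α.app Y)) (α.naturality f).symm)

lemma isIso_of_bijective_comp (P : ObjectProperty D) {X Y : D} (g : X ⟶ Y) (hX : P X)
    (hY : P Y) (h : ∀ U, P U → Bijective (fun u : U ⟶ X => u ≫ g)) : IsIso g := by
  obtain ⟨g', hg'⟩ := (h Y hY).2 (𝟙 Y)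
  refine ⟨g', (h X hX).1 ?_, hg'⟩
  simp only [Category.assoc, hg', Category.comp_id, Category.id_comp]

lemma bijective_comp_shift_map_iff [HasShift D ℤ] (n : ℤ) (W : D) {X Y : D} (f : X ⟶ Y) :
    Bijective (fun u : W ⟶ X⟦n⟧ => u ≫ f⟦n⟧') ↔ Bijective (fun v : W⟦-n⟧ ⟶ X => v ≫ f) := by
  let e (Z : D) : (W⟦-n⟧ ⟶ Z) ≃ (W ⟶ Z⟦n⟧) := (shiftEquiv D n).symm.toAdjunction.homEquiv W Z
  have : (fun u : W ⟶ X⟦n⟧ => u ≫ f⟦n⟧') = e Y ∘ (fun v => v ≫ f) ∘ (e X).symm := by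
    funext u
    obtain ⟨v, rfl⟩ := (e X).surjective u
    simp only [comp_apply, Equiv.symm_apply_apply]
    exact ((shiftEquiv D n).symm.toAdjunction.homEquiv_naturality_right v f).symm
  rw [this, Equiv.comp_bijective, Equiv.bijective_comp]

lemma bijective_comp_of_isIso (W : D) {X Y : D} (f : X ⟶ Y) [IsIso f] :
    Bijective (fun u : W ⟶ X => u ≫ f) :=
  ⟨fun u v h => by simpa using h =≫ inv f, fun v => ⟨v ≫ inv f, by simp⟩⟩

variable [Preadditive D]

lemma injective_comp_iff_eq_zero (W : D) {X Y : D} (f : X ⟶ Y) :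
    Injective (fun u : W ⟶ X => u ≫ f) ↔ ∀ u : W ⟶ X, u ≫ f = 0 → u = 0 :=
  injective_iff_map_eq_zero (Preadditive.rightComp W f)

lemma bijective_comp_of_leftOrthogonal {P : ObjectProperty D} {W : D}
    (hW : P.leftOrthogonal W) {X Y : D} (hX : P X) (hY : P Y) (f : X ⟶ Y) :
    Bijective (fun u : W ⟶ X => u ≫ f) :=
  ⟨fun u v _ => (hW u hX).trans (hW v hX).symm,
    fun v => ⟨0, (zero_comp).trans (hW v hY).symm⟩⟩

end Hom

section Triangles

variable {T₁ T₂ : Triangle C} (hT₁ : T₁ ∈ distTriang C) (hT₂ : T₂ ∈ distTriang C)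

include hT₁ in
lemma bijective_comp_mor₁ {W : C} (h₃ : ∀ g : W ⟶ T₁.obj₃, g = 0)
    (h₃' : ∀ g : W ⟶ T₁.obj₃⟦(-1 : ℤ)⟧, g = 0) :
    Bijective (fun u : W ⟶ T₁.obj₁ => u ≫ T₁.mor₁) := by
  refine ⟨(injective_comp_iff_eq_zero _ _).2 fun u hu => ?_, fun v => ?_⟩
  · obtain ⟨s, rfl⟩ := Triangle.coyoneda_exact₂ _ (inv_rot_of_distTriang _ hT₁) u hu
    obtain rfl : s = 0 := h₃' s
    exact zero_comp
  · obtain ⟨u, rfl⟩ := Triangle.coyoneda_exact₂ _ hT₁ v (h₃ _)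
    exact ⟨u, rfl⟩

include hT₁ hT₂ in
lemma injective_comp_hom₃ (φ : T₁ ⟶ T₂) {W : C}
    (h₁ : Surjective (fun u : W ⟶ T₁.obj₁ => u ≫ φ.hom₁))
    (h₂ : Injective (fun u : W ⟶ T₁.obj₂ => u ≫ φ.hom₂))
    (h₁' : Injective (fun u : W ⟶ T₁.obj₁⟦(1 : ℤ)⟧ => u ≫ φ.hom₁⟦(1 : ℤ)⟧')) :
    Injective (fun u : W ⟶ T₁.obj₃ => u ≫ φ.hom₃) := by
  rw [injective_comp_iff_eq_zero] at h₂ h₁' ⊢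
  intro u hu
  obtain ⟨v, rfl⟩ := Triangle.coyoneda_exact₃ _ hT₁ u <| h₁' _ <| by
    rw [Category.assoc, φ.comm₃, ← Category.assoc, hu, zero_comp]
  obtain ⟨s, hs⟩ := Triangle.coyoneda_exact₂ _ hT₂ (v ≫ φ.hom₂) <| by
    rw [Category.assoc, ← φ.comm₂, ← Category.assoc, hu]
  obtain ⟨s₁, rfl⟩ := h₁ s
  obtain rfl : v = s₁ ≫ T₁.mor₁ := sub_eq_zero.1 <| h₂ _ <| by
    dsimp only at hs
    rw [Preadditive.sub_comp, hs, Category.assoc, Category.assoc, φ.comm₁, sub_self]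
  rw [Category.assoc, comp_distTriang_mor_zero₁₂ _ hT₁, comp_zero]

include hT₁ hT₂ in
lemma surjective_comp_hom₂ (φ : T₁ ⟶ T₂) {W : C}
    (h₁ : Surjective (fun u : W ⟶ T₁.obj₁ => u ≫ φ.hom₁))
    (h₃ : Surjective (fun u : W ⟶ T₁.obj₃ => u ≫ φ.hom₃))
    (h₁' : Injective (fun u : W ⟶ T₁.obj₁⟦(1 : ℤ)⟧ => u ≫ φ.hom₁⟦(1 : ℤ)⟧')) :
    Surjective (fun u : W ⟶ T₁.obj₂ => u ≫ φ.hom₂) := by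
  intro v
  obtain ⟨u₃, hu₃⟩ := h₃ (v ≫ T₂.mor₂)
  dsimp only at hu₃
  rw [injective_comp_iff_eq_zero] at h₁'
  obtain ⟨u₂, rfl⟩ := Triangle.coyoneda_exact₃ _ hT₁ u₃ <| h₁' _ <| by
    rw [Category.assoc, φ.comm₃, ← Category.assoc, hu₃, Category.assoc,
      comp_distTriang_mor_zero₂₃ _ hT₂, comp_zero]
  obtain ⟨s, hs⟩ := Triangle.coyoneda_exact₂ _ hT₂ (v - u₂ ≫ φ.hom₂) <| by
    rw [Preadditive.sub_comp, Category.assoc, ← φ.comm₂, ← Category.assoc, hu₃, sub_self]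
  obtain ⟨s₁, rfl⟩ := h₁ s
  refine ⟨u₂ + s₁ ≫ T₁.mor₁, ?_⟩
  dsimp only at hs ⊢
  rw [Preadditive.add_comp, Category.assoc, φ.comm₁, ← Category.assoc, ← hs, add_sub_cancel]

include hT₁ hT₂ in
lemma bijective_comp_hom₂ (φ : T₁ ⟶ T₂) [IsIso φ.hom₃] {W : C}
    (h₁ : Bijective (fun u : W ⟶ T₁.obj₁ => u ≫ φ.hom₁))
    (h₁' : Injective (fun u : W ⟶ T₁.obj₁⟦(1 : ℤ)⟧ => u ≫ φ.hom₁⟦(1 : ℤ)⟧')) :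
    Bijective (fun u : W ⟶ T₁.obj₂ => u ≫ φ.hom₂) :=
  ⟨injective_comp_hom₃ (inv_rot_of_distTriang _ hT₁) (inv_rot_of_distTriang _ hT₂)
      ((invRotate C).map φ) (bijective_comp_of_isIso W (φ.hom₃⟦(-1 : ℤ)⟧')).2 h₁.1
      (bijective_comp_of_isIso W (φ.hom₃⟦(-1 : ℤ)⟧'⟦(1 : ℤ)⟧')).1,
    surjective_comp_hom₂ hT₁ hT₂ φ h₁.2 (bijective_comp_of_isIso W φ.hom₃).2 h₁'⟩

lemma isIso_of_bijective_comp_of_detects_zero (S : ObjectProperty C)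
    (hS : ∀ W, S W → S (W⟦(-1 : ℤ)⟧))
    (hdet : ∀ Z : C, (∀ W, S W → ∀ g : W ⟶ Z, g = 0) → IsZero Z) {E F : C} (f : E ⟶ F)
    (hf : ∀ W, S W → Bijective (fun u : W ⟶ E => u ≫ f)) : IsIso f := by
  obtain ⟨Z, g, h, hT⟩ := distinguished_cocone_triangle f
  have hfg : f ≫ g = 0 := comp_distTriang_mor_zero₁₂ _ hT
  have hhf : h ≫ f⟦(1 : ℤ)⟧' = 0 := comp_distTriang_mor_zero₃₁ _ hT
  refine (Triangle.isZero₃_iff_isIso₁ _ hT).1 (hdet Z fun W hW w => ?_)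
  have hinj := ((bijective_comp_shift_map_iff 1 W f).2 (hf _ (hS W hW))).1
  rw [injective_comp_iff_eq_zero] at hinj
  obtain ⟨v, hv⟩ := Triangle.coyoneda_exact₃ _ hT w <| hinj (w ≫ h) <| by
    rw [Category.assoc, hhf, comp_zero]
  obtain ⟨u, rfl⟩ := (hf W hW).2 v
  rw [hv]
  exact (Category.assoc u f g).trans (by rw [hfg, comp_zero])

end Triangles

lemma leftOrthogonal_le_shift {t : TStructure C} {a : ℤ} {W : C}
    (hW : (t.le a).leftOrthogonal W) (n : ℤ) : (t.le (a - n)).leftOrthogonal (W⟦n⟧) := by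
  intro Y g hY
  apply (shiftFunctor C (-n)).map_injective
  rw [Functor.map_zero, ← cancel_epi (shiftShiftNeg W n).inv, comp_zero]
  exact hW _ (t.le_shift (a - n) (-n) a (by lia) Y hY)

namespace TruncationData

variable {t : TStructure C} (d : TruncationData t)

def triangle (n : ℤ) (X : C) : Triangle C :=
  Triangle.mk ((d.ιLE n).app X) ((d.πGE (n + 1)).app X) (d.δ n X)

lemma triangle_distinguished (n : ℤ) (X : C) : d.triangle n X ∈ distTriang C :=
  d.triangle_mem n X

lemma shift_truncLE_hom_eq_zero {n : ℤ} {X Y : C} (hY : t.ge n Y)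
    (e : ((d.truncLE n).obj X)⟦(1 : ℤ)⟧ ⟶ Y) : e = 0 :=
  t.zero_of_isLE_of_isGE e (n - 1) n (by lia)
    ⟨t.le_shift n 1 (n - 1) (by lia) _ (d.truncLE_le n X)⟩ ⟨hY⟩

lemma isZero_truncGE_obj {n ℓ : ℤ} (h : n < ℓ) {X : C} (hX : t.le n X) :
    IsZero ((d.truncGE ℓ).obj X) := by
  obtain ⟨m, hm, rfl⟩ : ∃ m, n ≤ m ∧ ℓ = m + 1 := ⟨ℓ - 1, by lia, by lia⟩
  obtain ⟨e, he⟩ : ∃ e : ((d.truncLE m).obj X)⟦(1 : ℤ)⟧ ⟶ (d.truncGE (m + 1)).obj X,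
      𝟙 _ = d.δ m X ≫ e := Triangle.yoneda_exact₃ _ (d.triangle_distinguished m X) (𝟙 _) <| by
    rw [Category.comp_id]
    exact t.zero_of_isLE_of_isGE _ m (m + 1) (by lia) ⟨t.le_monotone hm _ hX⟩
      ⟨d.truncGE_ge _ X⟩
  rw [IsZero.iff_id_eq_zero, he,
    d.shift_truncLE_hom_eq_zero (t.ge_antitone (by lia) _ (d.truncGE_ge _ X)) e, comp_zero]

lemma isIso_ιLE_app {n : ℤ} {X : C} (hX : t.le n X) : IsIso ((d.ιLE n).app X) :=
  (Triangle.isZero₃_iff_isIso₁ _ (d.triangle_distinguished n X)).1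
    (d.isZero_truncGE_obj (lt_add_one n) hX)

lemma isZero_H_obj {n ℓ : ℤ} (h : n < ℓ) {X : C} (hX : t.le n X) :
    IsZero ((d.H ℓ).obj X) := by
  have := d.isIso_ιLE_app (t.le_monotone h.le _ hX)
  exact (shiftFunctor C ℓ).map_isZero
    (d.isZero_truncGE_obj h ((t.le n).prop_of_iso (asIso ((d.ιLE ℓ).app X)).symm hX))

lemma bijective_comp_ιLE_app {n : ℤ} {U : C} (hU : t.le n U) (X : C) :
    Bijective (fun u : U ⟶ (d.truncLE n).obj X => u ≫ (d.ιLE n).app X) :=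
  bijective_comp_mor₁ (d.triangle_distinguished n X)
    (fun g => t.zero_of_isLE_of_isGE g n (n + 1) (by lia) ⟨hU⟩ ⟨d.truncGE_ge _ X⟩)
    (fun g => t.zero_of_isLE_of_isGE g n (n + 2) (by lia) ⟨hU⟩
      ⟨t.ge_shift (n + 1) (-1) (n + 2) (by lia) _ (d.truncGE_ge _ X)⟩)

lemma isIso_truncLE_map_ιLE_app {ℓ m : ℤ} (h : ℓ ≤ m) (X : C) :
    IsIso ((d.truncLE ℓ).map ((d.ιLE m).app X)) := by
  refine isIso_of_bijective_comp (t.le ℓ) _ (d.truncLE_le ℓ _) (d.truncLE_le ℓ X) fun U hU => ?_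
  rw [← (d.bijective_comp_ιLE_app hU X).of_comp_iff']
  convert (d.bijective_comp_ιLE_app (t.le_monotone h _ hU) X).comp
    (d.bijective_comp_ιLE_app hU ((d.truncLE m).obj X)) using 1
  funext u
  simp

lemma δ_naturality (n : ℤ) {X Y : C} (f : X ⟶ Y) :
    d.δ n X ≫ ((d.truncLE n).map f)⟦(1 : ℤ)⟧' = (d.truncGE (n + 1)).map f ≫ d.δ n Y := by
  obtain ⟨c, hc₂, hc₃⟩ : ∃ c : (d.truncGE (n + 1)).obj X ⟶ (d.truncGE (n + 1)).obj Y,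
      (d.πGE (n + 1)).app X ≫ c = f ≫ (d.πGE (n + 1)).app Y ∧
        d.δ n X ≫ ((d.truncLE n).map f)⟦(1 : ℤ)⟧' = c ≫ d.δ n Y :=
    complete_distinguished_triangle_morphism _ _ (d.triangle_distinguished n X)
      (d.triangle_distinguished n Y) ((d.truncLE n).map f) f ((d.ιLE n).naturality f).symm
  obtain ⟨e, he⟩ : ∃ e : ((d.truncLE n).obj X)⟦(1 : ℤ)⟧ ⟶ (d.truncGE (n + 1)).obj Y,
      c - (d.truncGE (n + 1)).map f = d.δ n X ≫ e :=
    Triangle.yoneda_exact₃ _ (d.triangle_distinguished n X) _ <| by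
      show (d.πGE (n + 1)).app X ≫ _ = 0
      rw [Preadditive.comp_sub, hc₂]
      exact sub_eq_zero.2 ((d.πGE (n + 1)).naturality f)
  rw [d.shift_truncLE_hom_eq_zero (t.ge_antitone (by lia) _ (d.truncGE_ge _ Y)) e, comp_zero,
    sub_eq_zero] at he
  rw [← he]
  exact hc₃

def triangleMap (n : ℤ) {X Y : C} (f : X ⟶ Y) : d.triangle n X ⟶ d.triangle n Y :=
  Triangle.homMk _ _ ((d.truncLE n).map f) f ((d.truncGE (n + 1)).map f)
    ((d.ιLE n).naturality f).symm ((d.πGE (n + 1)).naturality f).symm (d.δ_naturality n f)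

lemma isIso_truncGE_map_of_isIso_H_map {n : ℤ} {X Y : C} (hX : t.le n X) (hY : t.le n Y)
    (f : X ⟶ Y) (hf : IsIso ((d.H n).map f)) : IsIso ((d.truncGE n).map f) := by
  have := d.isIso_ιLE_app hX
  have := d.isIso_ιLE_app hY
  have : IsIso ((shiftFunctor C n).map ((d.truncGE n).map f)) :=
    (isIso_map_iff_of_isIso_app (Functor.whiskerRight (d.ιLE n) (d.truncGE n ⋙ shiftFunctor C n))
      f (Functor.map_isIso (d.truncGE n ⋙ shiftFunctor C n) ((d.ιLE n).app X))
      (Functor.map_isIso (d.truncGE n ⋙ shiftFunctor C n) ((d.ιLE n).app Y))).1 hf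
  exact isIso_of_reflects_iso _ (shiftFunctor C n)

lemma isIso_H_map_truncLE_map {X Y : C} (f : X ⟶ Y) (hf : ∀ ℓ, IsIso ((d.H ℓ).map f))
    (m ℓ : ℤ) : IsIso ((d.H ℓ).map ((d.truncLE m).map f)) := by
  rcases le_or_gt ℓ m with h | h
  · have hι (Z : C) : IsIso ((d.H ℓ).map ((d.ιLE m).app Z)) :=
      have := d.isIso_truncLE_map_ιLE_app h Z
      Functor.map_isIso (d.truncGE ℓ ⋙ shiftFunctor C ℓ) _
    exact (isIso_map_iff_of_isIso_app (Functor.whiskerRight (d.ιLE m) (d.H ℓ)) f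
      (hι X) (hι Y)).2 (hf ℓ)
  · exact IsZero.isIso (d.isZero_H_obj h (d.truncLE_le m X))
      (d.isZero_H_obj h (d.truncLE_le m Y)) _

theorem bijective_comp_of_isIso_H_map {a : ℤ} {W : C} (hW : (t.le a).leftOrthogonal W)
    {n : ℤ} {X Y : C} (hX : t.le n X) (hY : t.le n Y) (f : X ⟶ Y)
    (hf : ∀ ℓ, IsIso ((d.H ℓ).map f)) : Bijective (fun u : W ⟶ X => u ≫ f) := by
  obtain ⟨k, hk⟩ : ∃ k : ℕ, n ≤ a + k := ⟨(n - a).toNat, by lia⟩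
  induction k generalizing a W n X Y with
  | zero =>
    exact bijective_comp_of_leftOrthogonal hW (t.le_monotone (by lia) _ hX)
      (t.le_monotone (by lia) _ hY) f
  | succ k ih =>
    obtain ⟨m, rfl⟩ : ∃ m, n = m + 1 := ⟨n - 1, by lia⟩
    have : IsIso (d.triangleMap m f).hom₃ := d.isIso_truncGE_map_of_isIso_H_map hX hY f (hf _)
    have hf₁ := d.isIso_H_map_truncLE_map f hf m
    refine bijective_comp_hom₂ (d.triangle_distinguished m X) (d.triangle_distinguished m Y)
      (d.triangleMap m f) (ih hW (d.truncLE_le m X) (d.truncLE_le m Y) _ hf₁ (by lia)) ?_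
    exact ((bijective_comp_shift_map_iff 1 W _).2 (ih (leftOrthogonal_le_shift hW (-1))
      (d.truncLE_le m X) (d.truncLE_le m Y) _ hf₁ (by lia))).1

end TruncationData

theorem isZero_of_heart_cohomology_zero_and_isIso_of_heart_cohomology_isIso
    (t : TStructure C) (d : TruncationData t) (A : ℤ) (G : C)
    (hgen : ∀ u : C, (∀ i : ℤ, ∀ f : (G⟦i⟧ : C) ⟶ u, f = 0) → IsZero u)
    (hvan : ∀ X : C, t.le (-A) X → ∀ f : G ⟶ X, f = 0) :
    (∀ F : C, (∃ n : ℤ, t.le n F) → (∀ ℓ : ℤ, IsZero ((d.H ℓ).obj F)) → IsZero F) ∧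
    (∀ (E F : C) (f : E ⟶ F), (∃ n : ℤ, t.le n E) → (∃ n : ℤ, t.le n F) →
      (∀ ℓ : ℤ, IsIso ((d.H ℓ).map f)) → IsIso f) := by
  let S : ObjectProperty C := fun W => ∃ a, (t.le a).leftOrthogonal W
  have hG (i : ℤ) : S (G⟦i⟧) := ⟨_, leftOrthogonal_le_shift (fun X g hX => hvan X hX g) i⟩
  have hiso (E F : C) (f : E ⟶ F) : (∃ n : ℤ, t.le n E) → (∃ n : ℤ, t.le n F) →
      (∀ ℓ : ℤ, IsIso ((d.H ℓ).map f)) → IsIso f := by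
    rintro ⟨nE, hE⟩ ⟨nF, hF⟩ hf
    refine isIso_of_bijective_comp_of_detects_zero S
      (fun W ⟨a, hW⟩ => ⟨_, leftOrthogonal_le_shift hW (-1)⟩)
      (fun Z hZ => hgen Z fun i => hZ _ (hG i)) f fun W ⟨a, hW⟩ => ?_
    exact d.bijective_comp_of_isIso_H_map hW (t.le_monotone (le_max_left nE nF) _ hE)
      (t.le_monotone (le_max_right nE nF) _ hF) f hf
  refine ⟨fun F hF hH => ?_, hiso⟩
  have hzero (ℓ : ℤ) : IsZero ((d.H ℓ).obj 0) :=
    d.isZero_H_obj (sub_one_lt ℓ) (t.isLE_of_isZero (isZero_zero C) _).le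
  have := hiso 0 F 0 ⟨0, (t.isLE_of_isZero (isZero_zero C) 0).le⟩ hF
    fun ℓ => (hzero ℓ).isIso (hH ℓ) _
  exact (isZero_zero C).of_iso (asIso (0 : 0 ⟶ F)).symm
end

section
/- Let R be a commutative ring, let A ⊆ B be R-linear categories, and let H, H' : B^op → Mod R be R-linear functors. If H admits an A-approximating system, then restriction to the subcategory A ⊆ B induces a bijection Hom(H, H') → Hom(H|_A, H'|_A). -/
/-!
Restriction to `A` is precomposition with the inclusion `A ⥤ B`, hence preserves the colimit
`H ≅ colim Hom(−, Eᵢ)`. A map out of a colimit is a compatible family of maps out of its terms, so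
it suffices that restriction is bijective on maps out of each representable `Hom(−, Eᵢ)`. By the
linear Yoneda lemma such a map is determined by, and can be built from, the image of `𝟙 Eᵢ`, and
since `Eᵢ` lies in the full subcategory `A` this element is seen by the restricted map as well.
-/

open CategoryTheory Limits Opposite

universe v u

namespace CategoryTheory

theorem Functor.map_bijective_of_isColimit {C D J : Type*} [Category C] [Category D] [Category J]
    (L : C ⥤ D) {F : J ⥤ C} {c : Cocone F} (hc : IsColimit c) [PreservesColimit F L] (Y : C)
    (h : ∀ j, Function.Bijective (L.map : (F.obj j ⟶ Y) → (L.obj (F.obj j) ⟶ L.obj Y))) :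
    Function.Bijective (L.map : (c.pt ⟶ Y) → (L.obj c.pt ⟶ L.obj Y)) := by
  have hLc : IsColimit (L.mapCocone c) := isColimitOfPreserves L hc
  refine ⟨fun φ ψ hφψ => hc.hom_ext fun j => (h j).1 ?_, fun g => ?_⟩
  · simp only [L.map_comp, hφψ]
  · choose lift hlift using fun j => (h j).2 (L.map (c.ι.app j) ≫ g)
    let s : Cocone F :=
      { pt := Y
        ι := { app := lift
               naturality := fun i j u => (h i).1 (by simp [hlift, ← L.map_comp_assoc]) } }
    refine ⟨hc.desc s, hLc.hom_ext fun j => ?_⟩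
    simp only [mapCocone_ι_app, ← L.map_comp, hc.fac]
    exact hlift j

section

variable {R : Type*} [Ring R] {C : Type*} [Category C] [Preadditive C] [Linear R C]

theorem linearYoneda_obj_hom_app_apply {X : C} {P : Cᵒᵖ ⥤ ModuleCat R}
    (φ : (linearYoneda R C).obj X ⟶ P) {W : C} (f : W ⟶ X) :
    φ.app (op W) f = P.map f.op (φ.app (op X) (𝟙 X)) :=
  (congrArg (φ.app (op W)) (Category.comp_id f).symm).trans
    (NatTrans.naturality_apply φ f.op (𝟙 X))

theorem linearYoneda_obj_hom_ext {X : C} {P : Cᵒᵖ ⥤ ModuleCat R}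
    {φ ψ : (linearYoneda R C).obj X ⟶ P} (h : φ.app (op X) (𝟙 X) = ψ.app (op X) (𝟙 X)) :
    φ = ψ := by
  ext ⟨W⟩ f
  rw [linearYoneda_obj_hom_app_apply φ f, linearYoneda_obj_hom_app_apply ψ f, h]

end

section

variable {R : Type*} [CommRing R] {C : Type*} [Category C] [Preadditive C] [Linear R C]

def linearYonedaHomMk (P : Cᵒᵖ ⥤ ModuleCat R) [P.Additive]
    (hP : ∀ (X Y : C) (f : X ⟶ Y) (r : R), P.map (r • f).op = r • P.map f.op)
    {X : C} (u : P.obj (op X)) : (linearYoneda R C).obj X ⟶ P where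
  app W := ModuleCat.ofHom
    { toFun := fun f => P.map f.op u
      map_add' := fun f g => by simp [op_add, P.map_add]
      map_smul' := fun r f => by simp [hP] }
  naturality W W' g := by
    ext f
    change P.map (f.op ≫ g) u = P.map g (P.map f.op u)
    rw [P.map_comp, ConcreteCategory.comp_apply]

theorem linearYonedaHomMk_app_apply (P : Cᵒᵖ ⥤ ModuleCat R) [P.Additive]
    (hP : ∀ (X Y : C) (f : X ⟶ Y) (r : R), P.map (r • f).op = r • P.map f.op)
    {X W : C} (u : P.obj (op X)) (f : W ⟶ X) :
    (linearYonedaHomMk P hP u).app (op W) f = P.map f.op u := rfl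

theorem whiskerLeft_linearYoneda_obj_bijective {D : Type*} [Category D] (ι : D ⥤ C) [ι.Full]
    (X : D) (P : Cᵒᵖ ⥤ ModuleCat R) [P.Additive]
    (hP : ∀ (X Y : C) (f : X ⟶ Y) (r : R), P.map (r • f).op = r • P.map f.op) :
    Function.Bijective
      (fun φ : (linearYoneda R C).obj (ι.obj X) ⟶ P => Functor.whiskerLeft ι.op φ) := by
  refine ⟨fun φ ψ hφψ => linearYoneda_obj_hom_ext ?_, fun ψ => ?_⟩
  · exact ConcreteCategory.congr_hom (NatTrans.congr_app hφψ (op X)) _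
  · refine ⟨linearYonedaHomMk P hP (ψ.app (op X) (𝟙 (ι.obj X))), ?_⟩
    ext ⟨Y⟩ f
    obtain ⟨g, rfl⟩ := ι.map_surjective f
    exact (linearYonedaHomMk_app_apply P hP _ _).trans
      ((NatTrans.naturality_apply ψ g.op _).symm.trans
        (congrArg (ψ.app (op Y)) (Category.comp_id _)))

end

end CategoryTheory

theorem restriction_bijective_of_approximating_system_general
    (R : Type v) [CommRing R] {B : Type u} [Category.{v} B] [Preadditive B] [Linear R B]
    (A : Set B)
    (H H' : Bᵒᵖ ⥤ ModuleCat.{v} R) [H'.Additive]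
    (hH'lin : ∀ (X Y : B) (f : X ⟶ Y) (r : R), H'.map (r • f).op = r • H'.map f.op)
    -- an A-approximating system for H:
    (E : ℕ → B) (e : ∀ i, E i ⟶ E (i + 1)) (hE : ∀ i, E i ∈ A)
    (iso : colimit (Functor.ofSequence (fun i => (linearYoneda R B).map (e i))) ≅ H) :
    Function.Bijective
      (fun φ : H ⟶ H' => Functor.whiskerLeft (ObjectProperty.ι (· ∈ A)).op φ) := by
  let F := Functor.ofSequence (fun i => (linearYoneda R B).map (e i))
  have hH : IsColimit ((colimit.cocone F).extend iso.hom) :=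
    (colimit.isColimit F).ofIsoColimit (Cocone.extendIso _ iso)
  exact Functor.map_bijective_of_isColimit
    ((Functor.whiskeringLeft _ _ _).obj (ObjectProperty.ι (· ∈ A)).op) hH H' fun j =>
      whiskerLeft_linearYoneda_obj_bijective (ObjectProperty.ι (· ∈ A)) ⟨E j, hE j⟩ H' hH'lin

theorem restriction_bijective_of_approximating_system
    (R : Type v) [CommRing R] {B : Type u} [Category.{v} B] [Preadditive B] [Linear R B]
    (A : Set B)
    (H H' : Bᵒᵖ ⥤ ModuleCat.{v} R) [H.Additive] [H'.Additive]
    (hHlin : ∀ (X Y : B) (f : X ⟶ Y) (r : R), H.map (r • f).op = r • H.map f.op)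
    (hH'lin : ∀ (X Y : B) (f : X ⟶ Y) (r : R), H'.map (r • f).op = r • H'.map f.op)
    -- an A-approximating system for H:
    (E : ℕ → B) (e : ∀ i, E i ⟶ E (i + 1)) (hE : ∀ i, E i ∈ A)
    (iso : colimit (Functor.ofSequence (fun i => (linearYoneda R B).map (e i))) ≅ H) :
    Function.Bijective
      (fun φ : H ⟶ H' => Functor.whiskerLeft (ObjectProperty.ι (· ∈ A)).op φ) :=
  restriction_bijective_of_approximating_system_general R A H H' hH'lin E e hE iso
end

section
/- Let L : U → S be a triangulated functor with right adjoint R : S → U. Suppose P is a class of objects of U with P = ΣP such that: (1) if u ∈ U and Hom(p, u) = 0 for all p ∈ P, then u = 0; (2) if s ∈ S and Hom(L(p), s) = 0 for all p ∈ P, then s = 0; (3) for every p ∈ P and u ∈ U the map Hom(p, u) → Hom(L(p), L(u)) induced by L is an isomorphism. Then L and R are mutually quasi-inverse equivalences of categories. -/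
/-!
For `p ∈ P`, composing with `η_u : u ⟶ R L u` is a bijection `Hom(p, u) ≃ Hom(p, R L u)`: it
is `L` on `Hom(p, u)` followed by the adjunction. The shift structure that `R` inherits from
`L` makes `η` commute with `⟦1⟧`, so composing with `η_u⟦1⟧` is injective on `Hom(p, u⟦1⟧)`.
The long exact `Hom(p, -)`-sequence of a triangle `u ⟶ R L u ⟶ Z ⟶ u⟦1⟧` then kills
`Hom(p, Z)` for all `p ∈ P`, so `Z = 0` and `η_u` is invertible. Once `η` is invertible, so is
`R ε`, hence composing with `ε_s` is bijective on `Hom(L x, L R s)`, and the same argument with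
the test objects `L p` shows that `ε` is invertible.
-/

open CategoryTheory Limits Pretriangulated

universe v₁ u₁ v₂ u₂

namespace CategoryTheory

section

variable {C : Type*} [Category C] [Preadditive C] [HasZeroObject C] [HasShift C ℤ]
  [∀ n : ℤ, (shiftFunctor C n).Additive] [Pretriangulated C]

lemma Pretriangulated.hom_obj₃_eq_zero (T : Triangle C) (hT : T ∈ distTriang C)
    {A : C} (hsurj : Function.Surjective (fun g : A ⟶ T.obj₁ => g ≫ T.mor₁))
    (hinj : ∀ g : A ⟶ T.obj₁⟦(1 : ℤ)⟧, g ≫ T.mor₁⟦(1 : ℤ)⟧' = 0 → g = 0)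
    (φ : A ⟶ T.obj₃) : φ = 0 := by
  have hφ : φ ≫ T.mor₃ = 0 :=
    hinj _ (by rw [Category.assoc, comp_distTriang_mor_zero₃₁ _ hT, comp_zero])
  obtain ⟨ψ, rfl⟩ := Triangle.coyoneda_exact₃ _ hT φ hφ
  obtain ⟨χ, rfl⟩ := hsurj ψ
  simp only [Category.assoc, comp_distTriang_mor_zero₁₂ _ hT, comp_zero]

lemma isIso_of_surjective_comp_of_injective_comp_shift {ι : Type*} (A : ι → C)
    (hA : ∀ X : C, (∀ i, ∀ g : A i ⟶ X, g = 0) → IsZero X) {X Y : C} (f : X ⟶ Y)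
    (hsurj : ∀ i, Function.Surjective (fun g : A i ⟶ X => g ≫ f))
    (hinj : ∀ i, ∀ g : A i ⟶ X⟦(1 : ℤ)⟧, g ≫ f⟦(1 : ℤ)⟧' = 0 → g = 0) : IsIso f := by
  obtain ⟨Z, g, h, hT⟩ := distinguished_cocone_triangle f
  refine (Triangle.isZero₃_iff_isIso₁ _ hT).1 (hA Z fun i => ?_)
  exact hom_obj₃_eq_zero _ hT (hsurj i) (hinj i)

lemma NatTrans.isIso_of_bijective_comp_app {D : Type*} [Category D] [HasShift D ℤ]
    {F G : D ⥤ C} [F.CommShift ℤ] [G.CommShift ℤ] (α : F ⟶ G) [NatTrans.CommShift α ℤ]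
    {ι : Type*} (A : ι → C) (hA : ∀ X : C, (∀ i, ∀ g : A i ⟶ X, g = 0) → IsZero X)
    (hα : ∀ i X, Function.Bijective (fun g : A i ⟶ F.obj X => g ≫ α.app X)) : IsIso α := by
  suffices ∀ X, IsIso (α.app X) from NatIso.isIso_of_isIso_app α
  intro X
  refine isIso_of_surjective_comp_of_injective_comp_shift A hA (α.app X) (fun i => (hα i X).2)
    fun i g hg => ?_
  rw [NatTrans.shift_app α (1 : ℤ) X, ← Category.assoc, ← Category.assoc,
    Preadditive.IsIso.comp_right_eq_zero] at hg
  rw [← Preadditive.IsIso.comp_right_eq_zero g ((F.commShiftIso (1 : ℤ)).inv.app X)]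
  exact (hα i _).1 (hg.trans zero_comp.symm)

end

namespace Adjunction

variable {C D : Type*} [Category C] [Category D] {F : C ⥤ D} {G : D ⥤ C} (adj : F ⊣ G)

lemma bijective_comp_unit_app_iff (X Y : C) :
    Function.Bijective (fun f : X ⟶ Y => f ≫ adj.unit.app Y) ↔
      Function.Bijective (fun f : X ⟶ Y => F.map f) := by
  rw [← Function.Bijective.of_comp_iff' (adj.homEquiv X (F.obj Y)).bijective]
  congr!
  exact (adj.unit_naturality _).symm

lemma bijective_comp_counit_app [IsIso adj.unit] (X : C) (Y : D) :
    Function.Bijective (fun f : F.obj X ⟶ F.obj (G.obj Y) => f ≫ adj.counit.app Y) := by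
  have : IsIso (G.map (adj.counit.app Y)) :=
    IsIso.of_isIso_fac_left (adj.right_triangle_components Y)
  exact (adj.comp_map_bijective_iff _ X).1 ((isIso_iff_yoneda_map_bijective _).1 this X)

end Adjunction

end CategoryTheory

theorem quasi_inverse_of_generating_class
    {U : Type u₁} [Category.{v₁} U] [Preadditive U] [HasZeroObject U] [HasShift U ℤ]
    [∀ n : ℤ, (shiftFunctor U n).Additive] [Pretriangulated U]
    {S : Type u₂} [Category.{v₂} S] [Preadditive S] [HasZeroObject S] [HasShift S ℤ]
    [∀ n : ℤ, (shiftFunctor S n).Additive] [Pretriangulated S]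
    (L : U ⥤ S) [L.CommShift ℤ] [L.IsTriangulated]
    (R : S ⥤ U) (adj : L ⊣ R)
    (P : Set U) (hP : ∀ X : U, X ∈ P ↔ (X⟦(1 : ℤ)⟧ : U) ∈ P)
    (h1 : ∀ u : U, (∀ p ∈ P, ∀ f : p ⟶ u, f = 0) → IsZero u)
    (h2 : ∀ s : S, (∀ p ∈ P, ∀ f : L.obj p ⟶ s, f = 0) → IsZero s)
    (h3 : ∀ p ∈ P, ∀ u : U, Function.Bijective (fun f : p ⟶ u => L.map f)) :
    IsIso adj.unit ∧ IsIso adj.counit := by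
  let := adj.rightAdjointCommShift ℤ
  have := adj.commShift_of_leftAdjoint ℤ
  have hunit : IsIso adj.unit :=
    NatTrans.isIso_of_bijective_comp_app adj.unit (fun p : P => p.1)
      (fun u hu => h1 u fun p hp => hu ⟨p, hp⟩)
      fun p u => (adj.bijective_comp_unit_app_iff p.1 u).2 (h3 p.1 p.2 u)
  exact ⟨hunit, NatTrans.isIso_of_bijective_comp_app adj.counit (fun p : P => L.obj p.1)
    (fun s hs => h2 s fun p hp => hs ⟨p, hp⟩) fun p s => adj.bijective_comp_counit_app p.1 s⟩
end
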